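/- If C ⊆ Fⁿ is a doubly-even code over F = F_{2^f}, then cwe(C) is invariant under each diagonal substitution d_r(x_a) = i^{φ(ar)} x_a for r ∈ F, where i = √−1 and φ is the mod-4 weight with respect to a self-complementary basis. -/

import Mathlib

open Finset MvPolynomial

/-- The complete weight enumerator of a code `C ⊆ Fⁿ`. -/
noncomputable def cwe {F : Type*} [Field F] [Fintype F] {n : ℕ}
    (C : Submodule F (Fin n → F)) [DecidablePred (· ∈ C)] : MvPolynomial F ℂ :=
  ∑ c ∈ Finset.univ.filter (fun c : Fin n → F => c ∈ C), ∏ i, MvPolynomial.X (c i)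

/-!
Since the basis is orthonormal for the trace form, `φ` is a quadratic refinement of `2 · tr`:
`φ (a + c) = φ a + φ c + 2 tr (a c)`. Iterating, `φ (∑ cᵢ) = Φ(c) + 2 tr (∑_{i<j} cᵢ cⱼ)`.
For `c` in a doubly-even code both `∑ rcᵢ = r ∑ cᵢ` and `∑_{i<j} rcᵢ rcⱼ = r² ∑_{i<j} cᵢ cⱼ`
vanish, so `Φ(rc) = 0` and `d_r` fixes the monomial `∏ x_{cᵢ}` of every codeword.
-/

def ZMod.doubleHom : ZMod 2 →+ ZMod 4 where
  toFun u := 2 * (u.val : ZMod 4)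
  map_zero' := by decide
  map_add' := by decide

theorem ZMod.natCast_val_add_of_zmod_two (u v : ZMod 2) :
    ((u + v).val : ZMod 4) = u.val + v.val + ZMod.doubleHom (u * v) := by
  revert u v; decide

theorem Complex.I_pow_eq_one_of_natCast_eq_zero {k : ℕ} (h : (k : ZMod 4) = 0) :
    Complex.I ^ k = 1 := by
  obtain ⟨m, rfl⟩ := (ZMod.natCast_eq_zero_iff k 4).mp h
  rw [pow_mul, Complex.I_pow_four, one_pow]

theorem LinearMap.apply_eq_sum_repr_mul_repr {K M ι : Type*} [CommSemiring K] [AddCommMonoid M]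
    [Module K M] [Fintype ι] [DecidableEq ι] (B : M →ₗ[K] M →ₗ[K] K) (b : Module.Basis ι K M)
    (hb : ∀ i j, B (b i) (b j) = if i = j then 1 else 0) (x y : M) :
    B x y = ∑ i, b.repr x i * b.repr y i := by
  conv_lhs => rw [← b.sum_repr x, ← b.sum_repr y]
  simp only [map_sum, LinearMap.sum_apply, map_smul, LinearMap.smul_apply, hb, smul_eq_mul,
    mul_ite, mul_one, mul_zero, Finset.sum_ite_eq', Finset.mem_univ, if_true]
  exact Finset.sum_congr rfl fun i _ => mul_comm _ _

theorem Finset.sum_filter_fst_lt_snd {R : Type*} [AddCommMonoid R] {n : ℕ}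
    (g : Fin n → Fin n → R) :
    ∑ p ∈ univ.filter (fun p : Fin n × Fin n => p.1 < p.2), g p.1 p.2 =
      ∑ i, ∑ j ∈ Ioi i, g i j := by
  rw [Finset.sum_filter, Fintype.sum_prod_type]
  refine Finset.sum_congr rfl fun i _ => ?_
  rw [← Finset.sum_filter]
  congr 1
  ext j
  simp

section QuadraticRefinement

variable {R A : Type*} [CommRing R] [AddCommGroup A] {q : R → A} {β : R →+ A}

theorem map_zero_of_map_add_eq (hq : ∀ a c, q (a + c) = q a + q c + β (a * c)) : q 0 = 0 := by
  simpa using hq 0 0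

theorem map_sum_eq_sum_add_sum_Ioi (hq : ∀ a c, q (a + c) = q a + q c + β (a * c)) :
    ∀ {n : ℕ} (c : Fin n → R), q (∑ i, c i) = ∑ i, q (c i) + β (∑ i, ∑ j ∈ Ioi i, c i * c j)
  | 0, c => by simp [map_zero_of_map_add_eq hq]
  | n + 1, c => by
    have hpairs : ∑ i : Fin (n + 1), ∑ j ∈ Ioi i, c i * c j
        = ∑ j : Fin n, c 0 * c j.succ + ∑ i : Fin n, ∑ j ∈ Ioi i, c i.succ * c j.succ := by
      rw [Fin.sum_univ_succ, Fin.sum_Ioi_zero]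
      congr 1
      exact Finset.sum_congr rfl fun i _ => Fin.sum_Ioi_succ _ i
    rw [Fin.sum_univ_succ, hq, map_sum_eq_sum_add_sum_Ioi hq, Fin.sum_univ_succ, hpairs,
      Finset.mul_sum, map_add]
    abel

theorem map_sum_eq_sum_add_sum_lt (hq : ∀ a c, q (a + c) = q a + q c + β (a * c))
    {n : ℕ} (c : Fin n → R) :
    q (∑ i, c i) = ∑ i, q (c i) +
      β (∑ p ∈ univ.filter (fun p : Fin n × Fin n => p.1 < p.2), c p.1 * c p.2) := by
  rw [sum_filter_fst_lt_snd (fun i j => c i * c j), map_sum_eq_sum_add_sum_Ioi hq]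

end QuadraticRefinement

namespace Module.Basis

variable {M ι : Type*} [AddCommGroup M] [Module (ZMod 2) M] [Fintype ι]

noncomputable def modFourWeight (b : Basis ι (ZMod 2) M) (x : M) : ZMod 4 :=
  ∑ i, ((b.repr x i).val : ZMod 4)

theorem modFourWeight_add (b : Basis ι (ZMod 2) M) (x y : M) :
    b.modFourWeight (x + y) = b.modFourWeight x + b.modFourWeight y +
      ZMod.doubleHom (∑ i, b.repr x i * b.repr y i) := by
  simp only [modFourWeight, map_add, Finsupp.add_apply, ZMod.natCast_val_add_of_zmod_two,
    map_sum, Finset.sum_add_distrib]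

theorem modFourWeight_add_of_trace_orthonormal {F : Type*} [Field F] [Algebra (ZMod 2) F]
    [DecidableEq ι] (b : Basis ι (ZMod 2) F)
    (hb : ∀ i j, Algebra.trace (ZMod 2) F (b i * b j) = if i = j then 1 else 0) (x y : F) :
    b.modFourWeight (x + y) = b.modFourWeight x + b.modFourWeight y +
      (ZMod.doubleHom.comp (Algebra.trace (ZMod 2) F).toAddMonoidHom) (x * y) := by
  have htr := (Algebra.traceForm (ZMod 2) F).apply_eq_sum_repr_mul_repr b hb x y
  rw [Algebra.traceForm_apply] at htr
  rw [modFourWeight_add, ← htr]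
  rfl

end Module.Basis

theorem MvPolynomial.aeval_C_I_pow_mul_X_prod_X {σ ι : Type*} (w : σ → ZMod 4) (s : Finset ι)
    (x : ι → σ) (h : ∑ i ∈ s, w (x i) = 0) :
    aeval (fun a => C (Complex.I ^ (w a).val) * X a) (∏ i ∈ s, X (x i) : MvPolynomial σ ℂ) =
      ∏ i ∈ s, X (x i) := by
  have hpow : Complex.I ^ ∑ i ∈ s, (w (x i)).val = 1 :=
    Complex.I_pow_eq_one_of_natCast_eq_zero (by simpa using h)
  simp only [map_prod, aeval_X]
  rw [Finset.prod_mul_distrib, ← map_prod, Finset.prod_pow_eq_pow_sum, hpow, map_one, one_mul]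

theorem stmt_16_general {F : Type*} [Field F] [Fintype F] [Algebra (ZMod 2) F] {f n : ℕ}
    (b : Module.Basis (Fin f) (ZMod 2) F)
    (hb : ∀ i j, Algebra.trace (ZMod 2) F (b i * b j) = if i = j then 1 else 0)
    (φ : F → ZMod 4)
    (hφ : ∀ a, φ a = ∑ i, ((b.repr a i).val : ZMod 4))
    (C : Submodule F (Fin n → F)) [DecidablePred (· ∈ C)]
    (hde : ∀ c ∈ C, (∑ i, c i) = 0 ∧
      ∑ p ∈ univ.filter (fun p : Fin n × Fin n => p.1 < p.2), c p.1 * c p.2 = 0) :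
    ∀ r : F,
      (MvPolynomial.aeval fun a : F =>
          MvPolynomial.C (Complex.I ^ (φ (a * r)).val) * MvPolynomial.X a :
        MvPolynomial F ℂ →ₐ[ℂ] MvPolynomial F ℂ) (cwe C) = cwe C := by
  intro r
  obtain rfl : φ = b.modFourWeight := funext hφ
  have hq := b.modFourWeight_add_of_trace_orthonormal hb
  have hΦ : ∀ c ∈ C, ∑ i, b.modFourWeight (c i * r) = 0 := by
    intro c hc
    obtain ⟨hsum, hpairs⟩ := hde c hc
    have hpairs_r : ∑ p ∈ univ.filter (fun p : Fin n × Fin n => p.1 < p.2),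
        c p.1 * r * (c p.2 * r) = 0 := by
      simp_rw [mul_mul_mul_comm _ r _ r]
      rw [← Finset.sum_mul, hpairs, zero_mul]
    have h := map_sum_eq_sum_add_sum_lt hq fun i => c i * r
    rw [← Finset.sum_mul, hsum, zero_mul, hpairs_r, map_zero_of_map_add_eq hq, map_zero,
      add_zero] at h
    exact h.symm
  rw [cwe, map_sum]
  exact Finset.sum_congr rfl fun c hc =>
    aeval_C_I_pow_mul_X_prod_X _ _ _ (hΦ c (Finset.mem_filter.mp hc).2)

theorem stmt_16 {F : Type*} [Field F] [Fintype F] [Algebra (ZMod 2) F] {f n : ℕ}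
    (hcard : Fintype.card F = 2 ^ f)
    (b : Module.Basis (Fin f) (ZMod 2) F)
    (hb : ∀ i j, Algebra.trace (ZMod 2) F (b i * b j) = if i = j then 1 else 0)
    (φ : F → ZMod 4)
    (hφ : ∀ a, φ a = ∑ i, ((b.repr a i).val : ZMod 4))
    (C : Submodule F (Fin n → F)) [DecidablePred (· ∈ C)]
    (hde : ∀ c ∈ C, (∑ i, c i) = 0 ∧
      ∑ p ∈ univ.filter (fun p : Fin n × Fin n => p.1 < p.2), c p.1 * c p.2 = 0) :
    ∀ r : F,
      (MvPolynomial.aeval fun a : F =>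
          MvPolynomial.C (Complex.I ^ (φ (a * r)).val) * MvPolynomial.X a :
        MvPolynomial F ℂ →ₐ[ℂ] MvPolynomial F ℂ) (cwe C) = cwe C :=
  stmt_16_general b hb φ hφ C hde
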